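/- arXiv:math/9410222 — 2 statements merged into one kernel-verified Lean document; each statement's English description precedes it below -/
import Mathlib

section
/- If X₁, X₂, … are i.i.d. real random variables with E[X₁] = 0 and P(X₁ = 0) < 1, then the random walk Sₙ = X₁ + ⋯ + Xₙ satisfies limsup_{n→∞} Sₙ = +∞ almost surely (Chung–Fuchs recurrence consequence). -/
/-!
Let `M = ⨆ n, S n` and let `M'` be the same supremum for the shifted walk `(X (n + 1))ₙ`, so
that `M = max 0 (X 0 + M')` wherever `M` is finite. By Kolmogorov's zero-one law the partial sums
are either a.s. unbounded above, which is the claim, or a.s. bounded above. In the bounded case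
`M` and `M'` are identically distributed with `|M - M'| ≤ |X 0|`, hence `𝔼[M - M'] = 0 = 𝔼[X 0]`;
as `M - M' ≥ X 0`, this forces `M = X 0 + M'` a.s. Since `X 0` is independent of `M'` and is
`≤ -δ` with positive probability, `P (M < r) = 0` then gives `P (M < r + δ) = 0`, so `M` would be
infinite a.s.
-/

open MeasureTheory ProbabilityTheory Filter Finset Topology

lemma bddAbove_range_const_add_iff {ι α : Type*} [AddCommGroup α] [PartialOrder α]
    [IsOrderedAddMonoid α] (c : α) (g : ι → α) :
    BddAbove (Set.range fun i => c + g i) ↔ BddAbove (Set.range g) := by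
  have := (OrderIso.addLeft c).bddAbove_image (s := Set.range g)
  rwa [← Set.range_comp] at this

lemma range_partialSums_eq_insert {α : Type*} [AddCommMonoid α] (y : ℕ → α) :
    Set.range (fun n => ∑ i ∈ range n, y i) =
      insert 0 (Set.range fun n => y 0 + ∑ i ∈ range n, y (i + 1)) := by
  rw [← Nat.range_of_succ, Set.singleton_union]
  simp [Function.comp_def, sum_range_succ', add_comm]

lemma bddAbove_range_partialSums_succ_iff {α : Type*} [AddCommGroup α] [LinearOrder α]
    [IsOrderedAddMonoid α] (y : ℕ → α) :
    BddAbove (Set.range fun n => ∑ i ∈ range n, y (i + 1)) ↔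
      BddAbove (Set.range fun n => ∑ i ∈ range n, y i) := by
  rw [range_partialSums_eq_insert y, bddAbove_insert, bddAbove_range_const_add_iff]

lemma bddAbove_range_partialSums_add_iff {α : Type*} [AddCommGroup α] [LinearOrder α]
    [IsOrderedAddMonoid α] (y : ℕ → α) (N : ℕ) :
    BddAbove (Set.range fun n => ∑ i ∈ range n, y (i + N)) ↔
      BddAbove (Set.range fun n => ∑ i ∈ range n, y i) := by
  induction N with
  | zero => rfl
  | succ N ih =>
    rw [← ih, ← bddAbove_range_partialSums_succ_iff (fun i => y (i + N))]
    simp only [add_right_comm _ 1 N, add_assoc]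

lemma frequently_lt_of_not_bddAbove {α : Type*} [LinearOrder α] {f : ℕ → α}
    (h : ¬ BddAbove (Set.range f)) (C : α) :
    ∃ᶠ n in atTop, C < f n := by
  by_contra hC
  exact h (IsBoundedUnder.bddAbove_range ⟨C, by simpa [not_frequently] using hC⟩)

/-- Junk value: `0` when the partial sums are unbounded above. -/
noncomputable def supPartialSums (y : ℕ → ℝ) : ℝ := ⨆ n, ∑ i ∈ range n, y i

lemma measurable_supPartialSums : Measurable supPartialSums :=
  Measurable.iSup fun n => measurable_sum (range n) fun i _ => measurable_pi_apply i

lemma supPartialSums_nonneg (y : ℕ → ℝ) : 0 ≤ supPartialSums y := by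
  by_cases h : BddAbove (Set.range fun n => ∑ i ∈ range n, y i)
  · simpa [supPartialSums] using le_ciSup h 0
  · rw [supPartialSums, Real.iSup_of_not_bddAbove h]

lemma supPartialSums_eq_max (y : ℕ → ℝ)
    (h : BddAbove (Set.range fun n => ∑ i ∈ range n, y i)) :
    supPartialSums y = max 0 (y 0 + supPartialSums fun i => y (i + 1)) := by
  rw [← bddAbove_range_partialSums_succ_iff] at h
  rw [supPartialSums, iSup, range_partialSums_eq_insert,
    csSup_insert ((bddAbove_range_const_add_iff _ _).2 h) (Set.range_nonempty _),
    ← iSup, ← add_ciSup h, supPartialSums]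

lemma abs_max_zero_add_sub_le {x m : ℝ} (hm : 0 ≤ m) : |max 0 (x + m) - m| ≤ |x| := by
  simpa [max_eq_right hm] using abs_max_sub_max_le_max 0 (x + m) 0 m

lemma abs_clamp_sub_clamp_le (c a b : ℝ) :
    |max (-c) (min a c) - max (-c) (min b c)| ≤ |a - b| := by
  calc |max (-c) (min a c) - max (-c) (min b c)| ≤ |min a c - min b c| := by
        simpa using abs_max_sub_max_le_max (-c) (min a c) (-c) (min b c)
    _ ≤ |a - b| := by simpa using abs_min_sub_min_le_max a c b c

lemma clamp_eq_self_of_abs_le {c x : ℝ} (h : |x| ≤ c) : max (-c) (min x c) = x := by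
  rw [abs_le] at h
  rw [min_eq_left h.2, max_eq_right h.1]

namespace ProbabilityTheory

variable {Ω : Type*} {m : MeasurableSpace Ω} {P : Measure Ω}

lemma iIndepFun.identDistrib_shift {β : Type*} [MeasurableSpace β] {X : ℕ → Ω → β}
    (hmeas : ∀ i, Measurable (X i)) (hindep : iIndepFun X P)
    (hident : ∀ i, IdentDistrib (X i) (X 0) P P) :
    IdentDistrib (fun ω n => X n ω) (fun ω n => X (n + 1) ω) P P where
  aemeasurable_fst := (measurable_pi_lambda _ hmeas).aemeasurable
  aemeasurable_snd := (measurable_pi_lambda _ fun n => hmeas (n + 1)).aemeasurable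
  map_eq := by
    rw [hindep.map_fun_eq_infinitePi_map hmeas,
      (hindep.precomp (add_left_injective 1)).map_fun_eq_infinitePi_map fun n => hmeas (n + 1)]
    congr 1
    ext1 i
    rw [(hident i).map_eq, (hident (i + 1)).map_eq]

lemma iIndepFun.indepFun_head_tail {β : Type*} [mβ : MeasurableSpace β] {X : ℕ → Ω → β}
    (hmeas : ∀ i, Measurable (X i)) (hindep : iIndepFun X P) :
    IndepFun (X 0) (fun ω n => X (n + 1) ω) P := by
  rw [IndepFun_iff_Indep]
  have h := indep_iSup_of_disjoint (fun i => (hmeas i).comap_le) hindep.iIndep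
    (S := {0}) (T := {i | 0 < i}) (by simp)
  refine indep_of_indep_of_le_right (indep_of_indep_of_le_left h ?_) ?_
  · exact le_iSup₂ (f := fun i (_ : i ∈ ({0} : Set ℕ)) => mβ.comap (X i)) 0 rfl
  · rw [MeasurableSpace.pi, MeasurableSpace.comap_iSup, iSup_le_iff]
    intro n
    rw [MeasurableSpace.comap_comp]
    exact le_iSup₂ (f := fun i (_ : i ∈ {i : ℕ | 0 < i}) => mβ.comap (X i)) (n + 1) n.succ_pos

lemma iIndepFun.ae_bddAbove_or_ae_not_bddAbove [IsProbabilityMeasure P] {X : ℕ → Ω → ℝ}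
    (hmeas : ∀ i, Measurable (X i)) (hindep : iIndepFun X P) :
    (∀ᵐ ω ∂P, BddAbove (Set.range fun n => ∑ i ∈ range n, X i ω)) ∨
      ∀ᵐ ω ∂P, ¬ BddAbove (Set.range fun n => ∑ i ∈ range n, X i ω) := by
  have hE := measurableSet_bddAbove_range fun n => measurable_sum (range n) fun i _ => hmeas i
  have htail : MeasurableSet[limsup (fun n => MeasurableSpace.comap (X n) inferInstance) atTop]
      {ω | BddAbove (Set.range fun n => ∑ i ∈ range n, X i ω)} := by
    rw [limsup_eq_iInf_iSup_of_nat, MeasurableSpace.measurableSet_iInf]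
    intro N
    rw [show {ω | BddAbove (Set.range fun n => ∑ i ∈ range n, X i ω)} =
        {ω | BddAbove (Set.range fun n => ∑ i ∈ range n, X (i + N) ω)} from
      Set.ext fun ω => (bddAbove_range_partialSums_add_iff (fun i => X i ω) N).symm]
    refine measurableSet_bddAbove_range fun n => measurable_sum (range n) fun i _ => ?_
    exact (comap_measurable (X (i + N))).mono (le_iSup₂ (f := fun j (_ : j ≥ N) =>
      MeasurableSpace.comap (X j) inferInstance) (i + N) (Nat.le_add_left N i)) le_rfl
  rcases measure_zero_or_one_of_measurableSet_limsup_atTop (fun n => (hmeas n).comap_le)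
    hindep.iIndep htail with h | h
  · exact Or.inr (measure_eq_zero_iff_ae_notMem.1 h)
  · exact Or.inl ((ae_iff_measure_eq hE.nullMeasurableSet).2 (by rw [h, measure_univ]))

/-- The truncations `max (-c) (min · c)` are bounded, so have equal integrals, and are
1-Lipschitz, so dominated convergence applies. -/
lemma IdentDistrib.integral_sub_eq_zero [IsFiniteMeasure P] {A A' : Ω → ℝ}
    (h : IdentDistrib A A' P P) (hint : Integrable (fun ω => A ω - A' ω) P) :
    ∫ ω, (A ω - A' ω) ∂P = 0 := by
  have hclamp : ∀ c : ℝ, Measurable fun x : ℝ => max (-c) (min x c) := fun c =>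
    measurable_const.max (measurable_id.min measurable_const)
  have hint_clamp : ∀ (c : ℝ) {B : Ω → ℝ}, AEMeasurable B P →
      Integrable (fun ω => max (-c) (min (B ω) c)) P := fun c B hB =>
    .of_bound ((hclamp c).comp_aemeasurable hB).aestronglyMeasurable |c|
      (ae_of_all _ fun ω => abs_le.2 ⟨(neg_le_neg (le_abs_self c)).trans (le_max_left _ _),
        max_le (neg_le_abs c) ((min_le_right _ _).trans (le_abs_self c))⟩)
  have hzero : ∀ c : ℝ,
      ∫ ω, (max (-c) (min (A ω) c) - max (-c) (min (A' ω) c)) ∂P = 0 := fun c => by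
    rw [integral_sub (hint_clamp c h.aemeasurable_fst) (hint_clamp c h.aemeasurable_snd),
      sub_eq_zero]
    exact (h.comp (hclamp c)).integral_eq
  have hlim : Tendsto (fun n : ℕ =>
      ∫ ω, (max (-(n : ℝ)) (min (A ω) n) - max (-(n : ℝ)) (min (A' ω) n)) ∂P)
      atTop (𝓝 (∫ ω, (A ω - A' ω) ∂P)) := by
    refine tendsto_integral_of_dominated_convergence (fun ω => |A ω - A' ω|)
      (fun n => ((hint_clamp n h.aemeasurable_fst).sub
        (hint_clamp n h.aemeasurable_snd)).aestronglyMeasurable) hint.abs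
      (fun n => ae_of_all _ fun ω => abs_clamp_sub_clamp_le n (A ω) (A' ω))
      (ae_of_all _ fun ω => tendsto_const_nhds.congr' ?_)
    filter_upwards [tendsto_natCast_atTop_atTop.eventually_ge_atTop (max |A ω| |A' ω|)]
      with n hn
    rw [clamp_eq_self_of_abs_le (le_of_max_le_left hn),
      clamp_eq_self_of_abs_le (le_of_max_le_right hn)]
  exact tendsto_nhds_unique hlim (tendsto_const_nhds.congr fun n => (hzero n).symm)

lemma ae_eq_add_of_identDistrib_of_ae_eq_max [IsFiniteMeasure P] {A A' Z : Ω → ℝ}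
    (hAA' : IdentDistrib A A' P P) (hA' : ∀ᵐ ω ∂P, 0 ≤ A' ω)
    (hrec : ∀ᵐ ω ∂P, A ω = max 0 (Z ω + A' ω)) (hZ : Integrable Z P)
    (hZ0 : ∫ ω, Z ω ∂P = 0) :
    ∀ᵐ ω ∂P, A ω = Z ω + A' ω := by
  have hint : Integrable (fun ω => A ω - A' ω) P := by
    refine hZ.abs.mono' (hAA'.aemeasurable_fst.sub hAA'.aemeasurable_snd).aestronglyMeasurable ?_
    filter_upwards [hA', hrec] with ω h0 h
    rw [h]
    exact abs_max_zero_add_sub_le h0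
  have hnonneg : 0 ≤ᵐ[P] fun ω => A ω - A' ω - Z ω := by
    filter_upwards [hrec] with ω h
    simp only [Pi.zero_apply, h]
    linarith [le_max_right 0 (Z ω + A' ω)]
  have hzero : ∫ ω, (A ω - A' ω - Z ω) ∂P = 0 := by
    rw [integral_sub hint hZ, hAA'.integral_sub_eq_zero hint, hZ0, sub_zero]
  filter_upwards [(integral_eq_zero_iff_of_nonneg_ae hnonneg (hint.sub hZ)).1 hzero] with ω h
  simp only [Pi.zero_apply] at h
  linarith

/-- On `{Z ≤ -δ}`, which is independent of `A'`, `A' < r + δ` forces `A < r`; by induction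
`P (A < k δ) = 0` for every `k`. -/
lemma not_ae_eq_add_of_identDistrib_of_indepFun [IsProbabilityMeasure P] {A A' Z : Ω → ℝ}
    (hAA' : IdentDistrib A A' P P) (hind : IndepFun Z A' P) (hA : ∀ᵐ ω ∂P, 0 ≤ A ω)
    {δ : ℝ} (hδ : 0 < δ) (hZδ : 0 < P {ω | Z ω ≤ -δ}) :
    ¬ ∀ᵐ ω ∂P, A ω = Z ω + A' ω := by
  intro hsum
  have hstep : ∀ r : ℝ, P {ω | A ω < r} = 0 → P {ω | A ω < r + δ} = 0 := by
    intro r hr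
    have hprod := hind.measure_inter_preimage_eq_mul (Set.Iic (-δ)) (Set.Iio (r + δ))
      measurableSet_Iic measurableSet_Iio
    have hle : P (Z ⁻¹' Set.Iic (-δ) ∩ A' ⁻¹' Set.Iio (r + δ)) ≤ P {ω | A ω < r} := by
      refine measure_mono_ae ?_
      filter_upwards [hsum] with ω h ⟨h1, h2⟩
      simp only [Set.mem_preimage, Set.mem_Iic, Set.mem_Iio] at h1 h2
      show A ω < r
      linarith
    rw [hr, nonpos_iff_eq_zero, hprod, mul_eq_zero] at hle
    show P (A ⁻¹' Set.Iio (r + δ)) = 0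
    rw [hAA'.measure_mem_eq measurableSet_Iio]
    exact hle.resolve_left hZδ.ne'
  have hk : ∀ k : ℕ, P {ω | A ω < k * δ} = 0 := by
    intro k
    induction k with
    | zero =>
      rw [Nat.cast_zero, zero_mul]
      exact measure_eq_zero_iff_ae_notMem.2 (hA.mono fun ω h => not_lt.2 h)
    | succ k ih => simpa [add_mul] using hstep _ ih
  have huniv : Set.univ ⊆ ⋃ k : ℕ, {ω | A ω < k * δ} := fun ω _ => by
    obtain ⟨k, hk⟩ := exists_nat_gt (A ω / δ)
    exact Set.mem_iUnion.2 ⟨k, (div_lt_iff₀ hδ).1 hk⟩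
  simpa using measure_mono_null huniv (measure_iUnion_null hk)

lemma exists_pos_measure_le_neg_of_integral_eq_zero [IsFiniteMeasure P] {Z : Ω → ℝ}
    (hZ : Integrable Z P) (hZ0 : ∫ ω, Z ω ∂P = 0) (hne : ¬ Z =ᵐ[P] 0) :
    ∃ δ > 0, 0 < P {ω | Z ω ≤ -δ} := by
  by_contra! h
  have hnonneg : 0 ≤ᵐ[P] Z := by
    have : ∀ᵐ ω ∂P, ∀ k : ℕ, ¬ Z ω ≤ -(1 / (k + 1)) := ae_all_iff.2 fun k =>
      measure_eq_zero_iff_ae_notMem.1 (nonpos_iff_eq_zero.1 (h _ Nat.one_div_pos_of_nat))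
    filter_upwards [this] with ω hω
    have hlim : Tendsto (fun k : ℕ => -(1 / ((k : ℝ) + 1))) atTop (𝓝 0) := by
      simpa using (tendsto_one_div_add_atTop_nhds_zero_nat (𝕜 := ℝ)).neg
    exact le_of_tendsto' hlim fun k => (not_le.1 (hω k)).le
  exact hne ((integral_eq_zero_iff_of_nonneg_ae hnonneg hZ).1 hZ0)

end ProbabilityTheory

/-- Chung–Fuchs consequence: a mean-zero i.i.d. random walk with non-degenerate
steps has `limsup Sₙ = +∞` almost surely. -/
theorem limsup_random_walk_eq_top
    {Ω : Type*} {m : MeasurableSpace Ω} (P : Measure Ω) [IsProbabilityMeasure P]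
    (X : ℕ → Ω → ℝ) (hmeas : ∀ i, Measurable (X i))
    (hindep : iIndepFun X P)
    (hident : ∀ i, IdentDistrib (X i) (X 0) P P)
    (hint : Integrable (X 0) P)
    (hmean : ∫ ω, X 0 ω ∂P = 0)
    (hnondeg : P {ω | X 0 ω = 0} < 1) :
    ∀ᵐ ω ∂P, ∀ C : ℝ, ∃ᶠ n in atTop, C < ∑ i ∈ Finset.range n, X i ω := by
  set M : Ω → ℝ := fun ω => supPartialSums fun n => X n ω
  set M' : Ω → ℝ := fun ω => supPartialSums fun n => X (n + 1) ω
  have hlaw : IdentDistrib M M' P P :=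
    (hindep.identDistrib_shift hmeas hident).comp measurable_supPartialSums
  have hind : IndepFun (X 0) M' P :=
    (hindep.indepFun_head_tail hmeas).comp measurable_id measurable_supPartialSums
  have hne : ¬ X 0 =ᵐ[P] 0 := fun h => hnondeg.ne <| by
    rw [(ae_iff_measure_eq (p := fun ω => X 0 ω = 0)
      ((hmeas 0) (measurableSet_singleton 0)).nullMeasurableSet).1 h, measure_univ]
  obtain ⟨δ, hδ, hXδ⟩ := exists_pos_measure_le_neg_of_integral_eq_zero hint hmean hne
  rcases hindep.ae_bddAbove_or_ae_not_bddAbove hmeas with hbdd | hunbdd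
  · have hrec : ∀ᵐ ω ∂P, M ω = max 0 (X 0 ω + M' ω) :=
      hbdd.mono fun ω h => supPartialSums_eq_max _ h
    exact absurd (ae_eq_add_of_identDistrib_of_ae_eq_max hlaw
        (ae_of_all _ fun ω => supPartialSums_nonneg _) hrec hint hmean)
      (not_ae_eq_add_of_identDistrib_of_indepFun hlaw hind
        (ae_of_all _ fun ω => supPartialSums_nonneg _) hδ hXδ)
  · filter_upwards [hunbdd] with ω hω C
    exact frequently_lt_of_not_bddAbove hω C
end

section
/- (Lebesgue decomposition dichotomy) Let (Xₙ) be a nonnegative P-martingale with X₀ = 1 and let P̃ be the probability measure on F_∞ with dP̃/dP|_{Fₙ} = Xₙ. Then X_∞ = lim Xₙ exists P-a.s., and dP̃ = X_∞ 1{X_∞ < ∞} dP + 1{limsup Xₙ = ∞} dP̃; in particular E_P[X_∞] = 1 if and only if limsup Xₙ < ∞ P̃-almost surely, and X_∞ = 0 P-a.s. if and only if limsup Xₙ = ∞ P̃-a.s. -/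
/-!
Put `ρ = P + P̃` and `q = dP̃/dρ ∈ [0, 1]`, so that `dP/dρ = 1 - q`. On `Fₙ` the `ρ`-density of
`P̃` is `Xₙ` times that of `P`, hence `Yₙ = E_ρ[q | Fₙ]` satisfies `Yₙ = Xₙ (1 - Yₙ)`, i.e.
`Yₙ = Xₙ / (1 + Xₙ)`. By Lévy's upward theorem `Yₙ → Z = E_ρ[q | F_∞]` `ρ`-a.s., so `Xₙ` tends to
`Z / (1 - Z)` on `{Z < 1}` and to `∞` on `{Z = 1}`. On `F_∞` we have `P̃ = Z ρ` and
`P = (1 - Z) ρ`, which gives `P̃ = (Z / (1 - Z)) P + P̃|_{Z = 1}` with `P {Z = 1} = 0`.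
-/

open MeasureTheory ProbabilityTheory Filter Set
open scoped ENNReal Topology

namespace Real

variable {ι : Type*} {l : Filter ι} {x : ι → ℝ} {z : ℝ}

lemma eq_div_one_add_div_one_sub_div_one_add {a : ℝ} (ha : 0 ≤ a) :
    a = a / (1 + a) / (1 - a / (1 + a)) := by
  have : 1 + a ≠ 0 := by linarith
  field_simp
  ring

lemma one_sub_div_one_add {a : ℝ} (ha : 0 ≤ a) : 1 - a / (1 + a) = (1 + a)⁻¹ := by
  have : 1 + a ≠ 0 := by linarith
  field_simp
  ring

lemma tendsto_of_tendsto_div_one_add (hx : ∀ i, 0 ≤ x i)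
    (h : Tendsto (fun i => x i / (1 + x i)) l (𝓝 z)) (hz : z ≠ 1) :
    Tendsto x l (𝓝 (z / (1 - z))) :=
  (h.div (tendsto_const_nhds.sub h) (sub_ne_zero.2 hz.symm)).congr fun i =>
    (eq_div_one_add_div_one_sub_div_one_add (hx i)).symm

lemma tendsto_atTop_of_tendsto_div_one_add_nhds_one (hx : ∀ i, 0 ≤ x i)
    (h : Tendsto (fun i => x i / (1 + x i)) l (𝓝 1)) : Tendsto x l atTop := by
  have h_inv : Tendsto (fun i => (1 + x i)⁻¹) l (𝓝[>] 0) := by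
    refine tendsto_nhdsWithin_iff.2 ⟨?_, Eventually.of_forall fun i => ?_⟩
    · simpa [one_sub_div_one_add (hx _)] using (tendsto_const_nhds (x := (1 : ℝ))).sub h
    · have := hx i
      exact mem_Ioi.2 (by positivity)
  simpa using (tendsto_inv_nhdsGT_zero.comp h_inv).atTop_add (tendsto_const_nhds (x := (-1 : ℝ)))

lemma limsup_coe_eq_top_iff_of_tendsto_div_one_add [l.NeBot] (hx : ∀ i, 0 ≤ x i)
    (h : Tendsto (fun i => x i / (1 + x i)) l (𝓝 z)) :
    limsup (fun i => (x i : EReal)) l = ⊤ ↔ z = 1 := by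
  by_cases hz : z = 1
  · subst hz
    simp only [iff_true]
    exact (EReal.tendsto_coe_nhds_top_iff.2
      (tendsto_atTop_of_tendsto_div_one_add_nhds_one hx h)).limsup_eq
  · simp only [hz, iff_false]
    have h_lim := (continuous_coe_real_ereal.tendsto _).comp
      (tendsto_of_tendsto_div_one_add hx h hz)
    exact h_lim.limsup_eq ▸ EReal.coe_ne_top _

end Real

section

variable {Ω : Type*}

namespace MeasureTheory.Measure

variable {m0 : MeasurableSpace Ω} {P Q : Measure Ω} [IsFiniteMeasure Q] {z : Ω → ℝ}

lemma toReal_rnDeriv_add_toReal_rnDeriv [IsFiniteMeasure P] :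
    ∀ᵐ ω ∂(P + Q), (P.rnDeriv (P + Q) ω).toReal + (Q.rnDeriv (P + Q) ω).toReal = 1 := by
  filter_upwards [rnDeriv_add' P Q (P + Q), rnDeriv_self (P + Q), P.rnDeriv_lt_top (P + Q),
    Q.rnDeriv_lt_top (P + Q)] with ω h_add h_self hP hQ
  rw [← ENNReal.toReal_add hP.ne hQ.ne, ← Pi.add_apply, ← h_add, h_self, ENNReal.toReal_one]

lemma withDensity_ofReal_one_sub_eq (hz : Measurable z) (hz0 : 0 ≤ᵐ[P + Q] z)
    (hz1 : z ≤ᵐ[P + Q] 1) (hQ : (P + Q).withDensity (fun ω => ENNReal.ofReal (z ω)) = Q) :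
    (P + Q).withDensity (fun ω => ENNReal.ofReal (1 - z ω)) = P := by
  ext A hA
  rw [withDensity_apply _ hA, ← ENNReal.add_left_inj (measure_ne_top Q A)]
  calc ∫⁻ ω in A, ENNReal.ofReal (1 - z ω) ∂(P + Q) + Q A
      = ∫⁻ ω in A, (ENNReal.ofReal (1 - z ω) + ENNReal.ofReal (z ω)) ∂(P + Q) := by
        rw [lintegral_add_left (by fun_prop),
          ← withDensity_apply (fun ω => ENNReal.ofReal (z ω)) hA, hQ]
    _ = ∫⁻ _ in A, 1 ∂(P + Q) := by
        refine setLIntegral_congr_fun_ae hA ?_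
        filter_upwards [hz0, hz1] with ω (h0 : 0 ≤ z ω) (h1 : z ω ≤ 1) _
        rw [← ENNReal.ofReal_add (sub_nonneg.2 h1) h0, sub_add_cancel, ENNReal.ofReal_one]
    _ = P A + Q A := by rw [setLIntegral_one, add_apply]

lemma measure_setOf_eq_one_eq_zero (hz : Measurable z) (hz0 : 0 ≤ᵐ[P + Q] z)
    (hz1 : z ≤ᵐ[P + Q] 1) (hQ : (P + Q).withDensity (fun ω => ENNReal.ofReal (z ω)) = Q) :
    P {ω | z ω = 1} = 0 := by
  have hT : MeasurableSet {ω | z ω = 1} := hz (measurableSet_singleton 1)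
  rw [← withDensity_ofReal_one_sub_eq hz hz0 hz1 hQ, withDensity_apply _ hT,
    setLIntegral_congr_fun hT fun ω (hω : z ω = 1) => by rw [hω, sub_self, ENNReal.ofReal_zero],
    lintegral_zero]

lemma eq_withDensity_add_restrict_setOf_eq_one (hz : Measurable z) (hz0 : 0 ≤ᵐ[P + Q] z)
    (hz1 : z ≤ᵐ[P + Q] 1) (hQ : (P + Q).withDensity (fun ω => ENNReal.ofReal (z ω)) = Q) :
    Q = P.withDensity (fun ω => ENNReal.ofReal (z ω / (1 - z ω)))
      + Q.restrict {ω | z ω = 1} := by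
  set T := {ω | z ω = 1}
  have hT : MeasurableSet T := hz (measurableSet_singleton 1)
  have hQ_apply : ∀ A, MeasurableSet A → Q A = ∫⁻ ω in A, ENNReal.ofReal (z ω) ∂(P + Q) :=
    fun A hA => by rw [← withDensity_apply _ hA, hQ]
  ext A hA
  calc Q A = ∫⁻ ω in A, ENNReal.ofReal (z ω) ∂(P + Q) := hQ_apply A hA
    _ = ∫⁻ ω in A, (ENNReal.ofReal (1 - z ω) * ENNReal.ofReal (z ω / (1 - z ω))
          + T.indicator (fun ω => ENNReal.ofReal (z ω)) ω) ∂(P + Q) := by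
        refine setLIntegral_congr_fun_ae hA ?_
        filter_upwards [hz0, hz1] with ω (h0 : 0 ≤ z ω) (h1 : z ω ≤ 1) _
        by_cases hω : z ω = 1
        · simp [T, hω]
        · rw [indicator_of_notMem (show ω ∉ T from hω), add_zero,
            ← ENNReal.ofReal_mul (sub_nonneg.2 h1), mul_div_cancel₀ _ (sub_ne_zero.2 (Ne.symm hω))]
    _ = ∫⁻ ω in A, ENNReal.ofReal (z ω / (1 - z ω)) ∂P + Q (A ∩ T) := by
        have h_P : ∫⁻ ω in A, ENNReal.ofReal (z ω / (1 - z ω)) ∂P = ∫⁻ ω in A,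
            ENNReal.ofReal (1 - z ω) * ENNReal.ofReal (z ω / (1 - z ω)) ∂(P + Q) := by
          conv_lhs => rw [← withDensity_ofReal_one_sub_eq hz hz0 hz1 hQ]
          exact setLIntegral_withDensity_eq_setLIntegral_mul _ (by fun_prop) (by fun_prop) hA
        rw [lintegral_add_left (by fun_prop), lintegral_indicator hT, restrict_restrict hT,
          inter_comm, ← hQ_apply _ (hA.inter hT), h_P]
    _ = _ := by rw [add_apply, withDensity_apply _ hA, restrict_apply hA]

end MeasureTheory.Measure

/-- `Yₙ` (for `m = Fₙ`) and `Z` (for `m = F_∞`) of the sketch above, with `ρ = P + Q`. -/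
noncomputable def condDensity {m0 : MeasurableSpace Ω} (P Q : Measure Ω) (m : MeasurableSpace Ω) :
    Ω → ℝ :=
  (P + Q)[fun ω => (Q.rnDeriv (P + Q) ω).toReal | m]

lemma stronglyMeasurable_condDensity {m m0 : MeasurableSpace Ω} {P Q : Measure Ω} :
    StronglyMeasurable[m] (condDensity P Q m) :=
  stronglyMeasurable_condExp

section CondDensity

variable {m m0 : MeasurableSpace Ω} {P Q : Measure Ω} [IsFiniteMeasure P] [IsFiniteMeasure Q]

lemma condDensity_mem_Icc (hm : m ≤ m0) : ∀ᵐ ω ∂(P + Q), condDensity P Q m ω ∈ Icc 0 1 := by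
  have h_le : (fun ω => (Q.rnDeriv (P + Q) ω).toReal) ≤ᵐ[P + Q] fun _ => 1 :=
    (Measure.toReal_rnDeriv_add_toReal_rnDeriv (P := P) (Q := Q)).mono fun ω h => by
      linarith [ENNReal.toReal_nonneg (a := P.rnDeriv (P + Q) ω)]
  filter_upwards [condExp_nonneg (m := m) (ae_of_all (P + Q) fun ω => ENNReal.toReal_nonneg),
    condExp_mono (m := m) Measure.integrable_toReal_rnDeriv (integrable_const 1) h_le]
    with ω h0 h1
  exact ⟨h0, h1.trans_eq (by rw [condExp_const hm])⟩

lemma condExp_toReal_rnDeriv_eq_mul_condExp (hm : m ≤ m0) {ρ : Measure Ω} [IsFiniteMeasure ρ]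
    (hP : P ≪ ρ) (hQ : Q ≪ ρ) {X : Ω → ℝ} (hX : StronglyMeasurable[m] X)
    (hX_int : Integrable X P) (hQX : ∀ A, MeasurableSet[m] A → Q.real A = ∫ ω in A, X ω ∂P) :
    ρ[fun ω => (Q.rnDeriv ρ ω).toReal | m]
      =ᵐ[ρ] X * ρ[fun ω => (P.rnDeriv ρ ω).toReal | m] := by
  have h_int : Integrable (X * fun ω => (P.rnDeriv ρ ω).toReal) ρ :=
    ((integrable_toReal_rnDeriv_mul_iff hP).2 hX_int).congr (ae_of_all _ fun _ => mul_comm _ _)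
  refine (ae_eq_condExp_of_forall_setIntegral_eq hm h_int
    (fun _ _ _ => integrable_condExp.integrableOn) (fun A hA _ => ?_)
    stronglyMeasurable_condExp.aestronglyMeasurable).trans
    (condExp_mul_of_stronglyMeasurable_left hX h_int Measure.integrable_toReal_rnDeriv)
  rw [setIntegral_condExp hm Measure.integrable_toReal_rnDeriv hA,
    Measure.setIntegral_toReal_rnDeriv hQ, hQX A hA,
    ← setIntegral_toReal_rnDeriv_mul hP (hm A hA)]
  simp only [Pi.mul_apply, mul_comm]

lemma condDensity_ae_eq_div_one_add (hm : m ≤ m0) {X : Ω → ℝ} (hX : StronglyMeasurable[m] X)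
    (hX_nonneg : ∀ ω, 0 ≤ X ω) (hX_int : Integrable X P)
    (hQX : ∀ A, MeasurableSet[m] A → Q A = ∫⁻ ω in A, ENNReal.ofReal (X ω) ∂P) :
    condDensity P Q m =ᵐ[P + Q] fun ω => X ω / (1 + X ω) := by
  unfold condDensity
  set ρ := P + Q
  set Y := ρ[fun ω => (Q.rnDeriv ρ ω).toReal | m]
  have hQX_real : ∀ A, MeasurableSet[m] A → Q.real A = ∫ ω in A, X ω ∂P := fun A hA => by
    rw [measureReal_def, hQX A hA, ← ofReal_integral_eq_lintegral_ofReal hX_int.integrableOn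
      (ae_of_all _ fun ω => hX_nonneg ω),
      ENNReal.toReal_ofReal (setIntegral_nonneg (hm A hA) fun ω _ => hX_nonneg ω)]
  have h_one_sub : ρ[fun ω => (P.rnDeriv ρ ω).toReal | m] =ᵐ[ρ] fun ω => 1 - Y ω := by
    have h_congr : (fun ω => (P.rnDeriv ρ ω).toReal) =ᵐ[ρ] fun ω => 1 - (Q.rnDeriv ρ ω).toReal :=
      Measure.toReal_rnDeriv_add_toReal_rnDeriv.mono fun ω h => by simp only; linarith
    filter_upwards [condExp_congr_ae h_congr, condExp_sub (integrable_const 1)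
      (Measure.integrable_toReal_rnDeriv (μ := Q) (ν := ρ)) m] with ω h h_sub
    rw [h, ← Pi.sub_def, h_sub, Pi.sub_apply, condExp_const hm]
  filter_upwards [condExp_toReal_rnDeriv_eq_mul_condExp hm
    (Measure.AbsolutelyContinuous.rfl.add_right Q) (Measure.AbsolutelyContinuous.rfl.add_right' P)
    hX hX_int hQX_real, h_one_sub] with ω h h_sub
  have := hX_nonneg ω
  rw [Pi.mul_apply, h_sub] at h
  rw [eq_div_iff (by positivity)]
  linarith

lemma trim_withDensity_condDensity (hm : m ≤ m0) :
    ((P + Q).trim hm).withDensity (fun ω => ENNReal.ofReal (condDensity P Q m ω)) = Q.trim hm := by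
  refine @Measure.ext _ m _ _ fun A hA => ?_
  rw [withDensity_apply _ hA, trim_measurableSet_eq hm hA,
    setLIntegral_trim hm stronglyMeasurable_condDensity.measurable.ennreal_ofReal hA, condDensity,
    ← ofReal_integral_eq_lintegral_ofReal integrable_condExp.integrableOn
      (ae_restrict_of_ae (condExp_nonneg (ae_of_all _ fun _ => ENNReal.toReal_nonneg))),
    setIntegral_condExp hm Measure.integrable_toReal_rnDeriv hA,
    Measure.setIntegral_toReal_rnDeriv (Measure.AbsolutelyContinuous.rfl.add_right' P),
    measureReal_def, ENNReal.ofReal_toReal (measure_ne_top Q A)]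

lemma lebesgue_decomposition_condDensity (hm : m ≤ m0) :
    P {ω | condDensity P Q m ω = 1} = 0 ∧ ∀ A, MeasurableSet[m] A →
      Q A = ∫⁻ ω in A, ENNReal.ofReal (condDensity P Q m ω / (1 - condDensity P Q m ω)) ∂P
        + Q (A ∩ {ω | condDensity P Q m ω = 1}) := by
  set Z := condDensity P Q m
  have hZ := (stronglyMeasurable_condDensity (P := P) (Q := Q) (m := m)).measurable
  have hT : MeasurableSet[m] {ω | Z ω = 1} := hZ (measurableSet_singleton 1)
  have h_dens : (P.trim hm + Q.trim hm).withDensity (fun ω => ENNReal.ofReal (Z ω))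
      = Q.trim hm := by
    rw [← trim_add]
    exact trim_withDensity_condDensity hm
  have hZ0 : 0 ≤ᵐ[P.trim hm + Q.trim hm] Z := by
    rw [← trim_add]
    exact (StronglyMeasurable.ae_le_trim_iff hm stronglyMeasurable_const
      stronglyMeasurable_condDensity).2 ((condDensity_mem_Icc hm).mono fun ω h => h.1)
  have hZ1 : Z ≤ᵐ[P.trim hm + Q.trim hm] 1 := by
    rw [← trim_add]
    exact (StronglyMeasurable.ae_le_trim_iff hm stronglyMeasurable_condDensity
      stronglyMeasurable_const).2 ((condDensity_mem_Icc hm).mono fun ω h => h.2)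
  refine ⟨?_, fun A hA => ?_⟩
  · rw [← trim_measurableSet_eq hm hT]
    exact Measure.measure_setOf_eq_one_eq_zero hZ hZ0 hZ1 h_dens
  · rw [← trim_measurableSet_eq hm hA,
      Measure.eq_withDensity_add_restrict_setOf_eq_one hZ hZ0 hZ1 h_dens, Measure.add_apply,
      withDensity_apply _ hA, setLIntegral_trim hm (by fun_prop) hA, Measure.restrict_apply hA,
      trim_measurableSet_eq hm (hA.inter hT)]

lemma ae_tendsto_div_one_add_condDensity (ℱ : Filtration ℕ m0) {X : ℕ → Ω → ℝ}
    (hX : StronglyAdapted ℱ X) (hX_nonneg : ∀ n ω, 0 ≤ X n ω) (hX_int : ∀ n, Integrable (X n) P)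
    (hQX : ∀ n A, MeasurableSet[ℱ n] A → Q A = ∫⁻ ω in A, ENNReal.ofReal (X n ω) ∂P) :
    ∀ᵐ ω ∂(P + Q), Tendsto (fun n => X n ω / (1 + X n ω)) atTop
      (𝓝 (condDensity P Q (⨆ n, ℱ n) ω)) := by
  have h_rep := ae_all_iff.2 fun n =>
    condDensity_ae_eq_div_one_add (ℱ.le n) (hX n) (hX_nonneg n) (hX_int n) (hQX n)
  filter_upwards [h_rep, tendsto_ae_condExp (μ := P + Q) (ℱ := ℱ) _] with ω h_rep h_levy
  exact h_levy.congr fun n => h_rep n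

end CondDensity

section TotalMass

variable {m0 : MeasurableSpace Ω} {P Q : Measure Ω} {f : Ω → ℝ} {T : Set Ω}

lemma integral_eq_one_iff_of_lintegral_add_eq_one (hf0 : 0 ≤ᵐ[P] f)
    (hf : AEStronglyMeasurable f P) (h : ∫⁻ ω, ENNReal.ofReal (f ω) ∂P + Q T = 1) :
    ∫ ω, f ω ∂P = 1 ↔ Q T = 0 := by
  rw [integral_eq_lintegral_of_nonneg_ae hf0 hf, ENNReal.toReal_eq_one_iff]
  constructor
  · intro hI
    rw [hI] at h
    simpa using h
  · intro hT
    simpa [hT] using h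

lemma ae_eq_zero_iff_of_lintegral_add_eq_one [IsProbabilityMeasure Q] (hT : MeasurableSet T)
    (hf0 : 0 ≤ᵐ[P] f) (hf : AEMeasurable f P) (h : ∫⁻ ω, ENNReal.ofReal (f ω) ∂P + Q T = 1) :
    (∀ᵐ ω ∂P, f ω = 0) ↔ Q Tᶜ = 0 := by
  have h_zero : (∀ᵐ ω ∂P, f ω = 0) ↔ ∫⁻ ω, ENNReal.ofReal (f ω) ∂P = 0 := by
    rw [lintegral_eq_zero_iff' hf.ennreal_ofReal]
    refine ⟨fun h0 => h0.mono fun ω hω => by simp [hω], fun h0 => ?_⟩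
    filter_upwards [h0, hf0] with ω hω hω0
    exact le_antisymm (ENNReal.ofReal_eq_zero.1 hω) hω0
  rw [h_zero, prob_compl_eq_zero_iff hT]
  constructor
  · intro hI
    simpa [hI] using h
  · intro hQT
    rw [hQT] at h
    simpa using h

end TotalMass

end

theorem lebesgue_decomposition_dichotomy_general
    {Ω : Type*} {m : MeasurableSpace Ω} (P : Measure Ω) [IsProbabilityMeasure P]
    (ℱ : Filtration ℕ m) (X : ℕ → Ω → ℝ)
    (hX : Martingale X ℱ P) (hnonneg : ∀ n ω, 0 ≤ X n ω)
    (Ptil : Measure Ω) [IsProbabilityMeasure Ptil]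
    (hdens : ∀ n (A : Set Ω), MeasurableSet[ℱ n] A →
      Ptil A = ∫⁻ ω in A, ENNReal.ofReal (X n ω) ∂P)
    (D : Set Ω)
    (hD : D = {ω | Filter.limsup (fun n => ((X n ω : ℝ) : EReal)) atTop = ⊤}) :
    ∃ Xinf : Ω → ℝ,
      (∀ᵐ ω ∂P, Tendsto (fun n => X n ω) atTop (nhds (Xinf ω))) ∧
      (∀ A : Set Ω, MeasurableSet[⨆ n, ℱ n] A →
        Ptil A = (∫⁻ ω in A, ENNReal.ofReal (Xinf ω) ∂P) + Ptil (A ∩ D)) ∧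
      ((∫ ω, Xinf ω ∂P = 1) ↔ Ptil D = 0) ∧
      ((∀ᵐ ω ∂P, Xinf ω = 0) ↔ Ptil Dᶜ = 0) := by
  have hsup : (⨆ n, ℱ n) ≤ m := iSup_le ℱ.le
  set Z := condDensity P Ptil (⨆ n, ℱ n)
  set T := {ω | Z ω = 1}
  have hT : MeasurableSet[⨆ n, ℱ n] T :=
    stronglyMeasurable_condDensity.measurable (measurableSet_singleton 1)
  have hZ01 := condDensity_mem_Icc (P := P) (Q := Ptil) hsup
  have h_lim := ae_tendsto_div_one_add_condDensity ℱ hX.stronglyAdapted hnonneg hX.integrable hdens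
  have hDT : D =ᵐ[P + Ptil] T := h_lim.mono fun ω h =>
    hD ▸ propext (Real.limsup_coe_eq_top_iff_of_tendsto_div_one_add (hnonneg · ω) h)
  have hPρ : P ≪ P + Ptil := Measure.AbsolutelyContinuous.rfl.add_right Ptil
  have hPtilρ : Ptil ≪ P + Ptil := Measure.AbsolutelyContinuous.rfl.add_right' P
  obtain ⟨hPT, h_decomp⟩ := lebesgue_decomposition_condDensity (P := P) (Q := Ptil) hsup
  set Xinf := fun ω => Z ω / (1 - Z ω)
  have hXinf : Measurable Xinf :=
    (stronglyMeasurable_condDensity.measurable.div (measurable_const.sub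
      stronglyMeasurable_condDensity.measurable)).mono hsup le_rfl
  have hXinf0 : 0 ≤ᵐ[P] Xinf :=
    (hZ01.filter_mono hPρ.ae_le).mono fun ω h => div_nonneg h.1 (sub_nonneg.2 h.2)
  have h_inter : ∀ A, Ptil (A ∩ D) = Ptil (A ∩ T) := fun A =>
    measure_congr (ae_eq_set_inter (ae_eq_refl A) (hPtilρ.ae_eq hDT))
  have h_total : ∫⁻ ω, ENNReal.ofReal (Xinf ω) ∂P + Ptil T = 1 := by
    simpa using (h_decomp univ MeasurableSet.univ).symm
  refine ⟨Xinf, ?_, fun A hA => (h_inter A).symm ▸ h_decomp A hA, ?_, ?_⟩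
  · filter_upwards [h_lim.filter_mono hPρ.ae_le, measure_eq_zero_iff_ae_notMem.1 hPT] with ω h hω
    exact Real.tendsto_of_tendsto_div_one_add (hnonneg · ω) h hω
  · rw [measure_congr (hPtilρ.ae_eq hDT)]
    exact integral_eq_one_iff_of_lintegral_add_eq_one hXinf0 hXinf.aestronglyMeasurable h_total
  · rw [measure_congr (hPtilρ.ae_eq hDT).compl]
    exact ae_eq_zero_iff_of_lintegral_add_eq_one (hsup _ hT) hXinf0 hXinf.aemeasurable h_total

/-- Lebesgue decomposition dichotomy for a nonnegative martingale `X` with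
`X₀ = 1` and the associated measure `P̃` with `dP̃/dP|_{Fₙ} = Xₙ`:
`X_∞ = lim Xₙ` exists `P`-a.s., and on `F_∞`
`dP̃ = X_∞ dP + 1{limsup Xₙ = ∞} dP̃`; in particular `E_P[X_∞] = 1` iff
`limsup Xₙ < ∞` `P̃`-a.s., and `X_∞ = 0` `P`-a.s. iff `limsup Xₙ = ∞` `P̃`-a.s. -/
theorem lebesgue_decomposition_dichotomy
    {Ω : Type*} {m : MeasurableSpace Ω} (P : Measure Ω) [IsProbabilityMeasure P]
    (ℱ : Filtration ℕ m) (X : ℕ → Ω → ℝ)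
    (hX : Martingale X ℱ P) (hnonneg : ∀ n ω, 0 ≤ X n ω) (hX0 : ∀ ω, X 0 ω = 1)
    (Ptil : Measure Ω) [IsProbabilityMeasure Ptil]
    (hdens : ∀ n (A : Set Ω), MeasurableSet[ℱ n] A →
      Ptil A = ∫⁻ ω in A, ENNReal.ofReal (X n ω) ∂P)
    (D : Set Ω)
    (hD : D = {ω | Filter.limsup (fun n => ((X n ω : ℝ) : EReal)) atTop = ⊤}) :
    ∃ Xinf : Ω → ℝ,
      (∀ᵐ ω ∂P, Tendsto (fun n => X n ω) atTop (nhds (Xinf ω))) ∧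
      (∀ A : Set Ω, MeasurableSet[⨆ n, ℱ n] A →
        Ptil A = (∫⁻ ω in A, ENNReal.ofReal (Xinf ω) ∂P) + Ptil (A ∩ D)) ∧
      ((∫ ω, Xinf ω ∂P = 1) ↔ Ptil D = 0) ∧
      ((∀ᵐ ω ∂P, Xinf ω = 0) ↔ Ptil Dᶜ = 0) :=
  lebesgue_decomposition_dichotomy_general P ℱ X hX hnonneg Ptil hdens D hD
end
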